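/- arXiv:1304.3311 — 3 statements merged into one kernel-verified Lean document; each statement's English description precedes it below -/
import Mathlib

section
/- Let p > 5 be prime and H ⊆ GL₂(F̄ₚ) a finite absolutely irreducible subgroup of order prime to p, with Z its group of scalar elements. Suppose H contains an element γ whose image in H/Z generates a cyclic subgroup of order greater than 5. Then H/Z is a dihedral group (i.e., not isomorphic to S₄, A₄, or A₅, and not cyclic). -/
open Matrix

/-!
If `H/Z` were cyclic, `H` would be abelian (its centre contains `H ∩ Z`), so by Schur's lemma
over the algebraically closed field every element of the irreducible group `H` would be scalar,
and `H/Z` would be trivial. The groups `S₄`, `A₄`, `A₅` have no elements of order greater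
than `5`, so they cannot contain the image of `γ` either.
-/

set_option maxRecDepth 10000 in
theorem Equiv.Perm.orderOf_le_four (σ : Equiv.Perm (Fin 4)) : orderOf σ ≤ 4 := by
  have hpow : ∀ τ : Equiv.Perm (Fin 4), τ ^ 4 = 1 ∨ τ ^ 3 = 1 := by decide
  rcases hpow σ with h | h
  · exact orderOf_le_of_pow_eq_one (by norm_num) h
  · exact (orderOf_le_of_pow_eq_one (by norm_num) h).trans (by norm_num)

theorem alternatingGroup.orderOf_le_three (σ : alternatingGroup (Fin 4)) : orderOf σ ≤ 3 := by
  have hpow : ∀ τ : alternatingGroup (Fin 4), τ ^ 3 = 1 ∨ τ ^ 2 = 1 := by decide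
  rcases hpow σ with h | h
  · exact orderOf_le_of_pow_eq_one (by norm_num) h
  · exact (orderOf_le_of_pow_eq_one (by norm_num) h).trans (by norm_num)

set_option maxRecDepth 10000 in
theorem alternatingGroup.orderOf_le_five (σ : alternatingGroup (Fin 5)) : orderOf σ ≤ 5 := by
  have hpow : ∀ τ : alternatingGroup (Fin 5), τ ^ 5 = 1 ∨ τ ^ 3 = 1 ∨ τ ^ 2 = 1 := by decide
  rcases hpow σ with h | h | h
  · exact orderOf_le_of_pow_eq_one (by norm_num) h
  · exact (orderOf_le_of_pow_eq_one (by norm_num) h).trans (by norm_num)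
  · exact (orderOf_le_of_pow_eq_one (by norm_num) h).trans (by norm_num)

theorem not_nonempty_mulEquiv_of_forall_orderOf_le {G G' : Type*} [Group G] [Group G'] {m : ℕ}
    (hG' : ∀ g : G', orderOf g ≤ m) {x : G} (hx : m < orderOf x) : ¬ Nonempty (G ≃* G') :=
  fun ⟨e⟩ => (hG' (e x)).not_gt (by rwa [MulEquiv.orderOf_eq])

theorem Subgroup.commute_of_isCyclic_map_mk'_center {G : Type*} [Group G] {H : Subgroup G}
    [IsCyclic (H.map (QuotientGroup.mk' (center G)))] {a b : G} (ha : a ∈ H) (hb : b ∈ H) :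
    Commute a b := by
  let f : H →* H.map (QuotientGroup.mk' (center G)) :=
    ((QuotientGroup.mk' (center G)).comp H.subtype).codRestrict _ fun a => ⟨a, a.2, rfl⟩
  have hker : f.ker ≤ center H := fun c hc => by
    have hcZ : (c : G) ∈ center G :=
      (QuotientGroup.eq_one_iff _).1 (congrArg Subtype.val (f.mem_ker.1 hc))
    exact Subgroup.mem_center_iff.2 fun d => Subtype.ext (Subgroup.mem_center_iff.1 hcZ d)
  have hcomm := f.isMulCommutative_of_isCyclic_of_ker_le_center hker
  exact congrArg Subtype.val (hcomm.is_comm.comm ⟨a, ha⟩ ⟨b, hb⟩)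

namespace Matrix.GeneralLinearGroup

variable {K n : Type*} [Field K] [Fintype n] [DecidableEq n]

def IsIrreducible (H : Subgroup (GL n K)) : Prop :=
  ∀ W : Submodule K (n → K), (∀ g ∈ H, ∀ x ∈ W, (g : Matrix n n K) *ᵥ x ∈ W) → W = ⊥ ∨ W = ⊤

theorem mem_center_of_forall_commute [IsAlgClosed K] [Nonempty n] {H : Subgroup (GL n K)}
    (hH : IsIrreducible H) {γ : GL n K} (hγ : ∀ g ∈ H, Commute γ g) :
    γ ∈ Subgroup.center (GL n K) := by
  obtain ⟨c, hc⟩ := Module.End.exists_eigenvalue (mulVecLin (γ : Matrix n n K))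
  have hinv : ∀ g ∈ H, ∀ x ∈ Module.End.eigenspace (mulVecLin (γ : Matrix n n K)) c,
      (g : Matrix n n K) *ᵥ x ∈ Module.End.eigenspace (mulVecLin (γ : Matrix n n K)) c := by
    intro g hg x hx
    rw [Module.End.mem_eigenspace_iff, mulVecLin_apply] at hx ⊢
    rw [mulVec_mulVec, ← Units.val_mul, (hγ g hg).eq, Units.val_mul, ← mulVec_mulVec, hx,
      mulVec_smul]
  have htop := (hH _ hinv).resolve_left hc
  refine mem_center_iff_val_mem_range_scalar.2 ⟨c, ?_⟩
  refine ext_iff_mulVec.2 fun x => ?_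
  have hx := Module.End.mem_eigenspace_iff.1 (htop ▸ Submodule.mem_top : x ∈ _)
  rw [mulVecLin_apply] at hx
  ext i
  simp [hx, mulVec_diagonal]

theorem le_center_of_isCyclic_map_mk'_center [IsAlgClosed K] [Nonempty n]
    {H : Subgroup (GL n K)} (hH : IsIrreducible H)
    [IsCyclic (H.map (QuotientGroup.mk' (Subgroup.center (GL n K))))] :
    H ≤ Subgroup.center (GL n K) := fun _ hγ =>
  mem_center_of_forall_commute hH fun _ hg => Subgroup.commute_of_isCyclic_map_mk'_center hγ hg

end Matrix.GeneralLinearGroup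

theorem stmt4_general (p : ℕ) [Fact p.Prime]
    (H : Subgroup (GL (Fin 2) (AlgebraicClosure (ZMod p))))
    (hirr : ∀ W : Submodule (AlgebraicClosure (ZMod p)) (Fin 2 → AlgebraicClosure (ZMod p)),
      (∀ g ∈ H, ∀ x ∈ W,
        (g : Matrix (Fin 2) (Fin 2) (AlgebraicClosure (ZMod p))) *ᵥ x ∈ W) →
      W = ⊥ ∨ W = ⊤)
    (γ : GL (Fin 2) (AlgebraicClosure (ZMod p))) (hγ : γ ∈ H)
    (hord : 5 < orderOf (QuotientGroup.mk'
      (Subgroup.center (GL (Fin 2) (AlgebraicClosure (ZMod p)))) γ)) :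
    ¬ IsCyclic (H.map (QuotientGroup.mk'
        (Subgroup.center (GL (Fin 2) (AlgebraicClosure (ZMod p)))))) ∧
    ¬ Nonempty ((H.map (QuotientGroup.mk'
        (Subgroup.center (GL (Fin 2) (AlgebraicClosure (ZMod p)))))) ≃* Equiv.Perm (Fin 4)) ∧
    ¬ Nonempty ((H.map (QuotientGroup.mk'
        (Subgroup.center (GL (Fin 2) (AlgebraicClosure (ZMod p)))))) ≃*
          alternatingGroup (Fin 4)) ∧
    ¬ Nonempty ((H.map (QuotientGroup.mk'
        (Subgroup.center (GL (Fin 2) (AlgebraicClosure (ZMod p)))))) ≃*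
          alternatingGroup (Fin 5)) := by
  set Z := Subgroup.center (GL (Fin 2) (AlgebraicClosure (ZMod p)))
  let γ' : H.map (QuotientGroup.mk' Z) := ⟨_, Subgroup.mem_map_of_mem _ hγ⟩
  have hγ' : 5 < orderOf γ' := by rwa [Subgroup.orderOf_mk]
  refine ⟨fun hcyc => ?_,
    not_nonempty_mulEquiv_of_forall_orderOf_le Equiv.Perm.orderOf_le_four
      (by omega : 4 < orderOf γ'),
    not_nonempty_mulEquiv_of_forall_orderOf_le alternatingGroup.orderOf_le_three
      (by omega : 3 < orderOf γ'),
    not_nonempty_mulEquiv_of_forall_orderOf_le alternatingGroup.orderOf_le_five hγ'⟩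
  have hγZ : γ ∈ Z := GeneralLinearGroup.le_center_of_isCyclic_map_mk'_center hirr hγ
  rw [QuotientGroup.mk'_apply, (QuotientGroup.eq_one_iff γ).2 hγZ, orderOf_one] at hord
  omega

/-- Let `p > 5` be prime and `H ⊆ GL₂(F̄ₚ)` a finite absolutely irreducible
subgroup of order prime to `p`, containing an element `γ` whose image in `H/Z ⊆ PGL₂(F̄ₚ)`
generates a cyclic subgroup of order `> 5`. Then `H/Z` is dihedral: it is not cyclic and not
isomorphic to `S₄`, `A₄` or `A₅`. -/
theorem stmt4 (p : ℕ) [Fact p.Prime] (hp : 5 < p)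
    (H : Subgroup (GL (Fin 2) (AlgebraicClosure (ZMod p)))) [Finite H]
    (hirr : ∀ W : Submodule (AlgebraicClosure (ZMod p)) (Fin 2 → AlgebraicClosure (ZMod p)),
      (∀ g ∈ H, ∀ x ∈ W,
        (g : Matrix (Fin 2) (Fin 2) (AlgebraicClosure (ZMod p))) *ᵥ x ∈ W) →
      W = ⊥ ∨ W = ⊤)
    (hcop : (Nat.card H).Coprime p)
    (γ : GL (Fin 2) (AlgebraicClosure (ZMod p))) (hγ : γ ∈ H)
    (hord : 5 < orderOf (QuotientGroup.mk'
      (Subgroup.center (GL (Fin 2) (AlgebraicClosure (ZMod p)))) γ)) :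
    ¬ IsCyclic (H.map (QuotientGroup.mk'
        (Subgroup.center (GL (Fin 2) (AlgebraicClosure (ZMod p)))))) ∧
    ¬ Nonempty ((H.map (QuotientGroup.mk'
        (Subgroup.center (GL (Fin 2) (AlgebraicClosure (ZMod p)))))) ≃* Equiv.Perm (Fin 4)) ∧
    ¬ Nonempty ((H.map (QuotientGroup.mk'
        (Subgroup.center (GL (Fin 2) (AlgebraicClosure (ZMod p)))))) ≃*
          alternatingGroup (Fin 4)) ∧
    ¬ Nonempty ((H.map (QuotientGroup.mk'
        (Subgroup.center (GL (Fin 2) (AlgebraicClosure (ZMod p)))))) ≃*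
          alternatingGroup (Fin 5)) :=
  stmt4_general p H hirr γ hγ hord
end

section
/- Let G be a dihedral subgroup of PGL₂(F̄ₚ) and suppose an element g ∈ G generates a cyclic subgroup of even order greater than 5. Then g lies in the maximal cyclic (rotation) subgroup of G, and the preimage in GL₂ of the center of G contains a scalar element of order two. -/
open Matrix
open scoped MatrixGroups

/-!
Lift `g` and an element `r ∈ G \ C` to `a, b ∈ H`. Since `r g r⁻¹ = g⁻¹`, the element
`w = b a b⁻¹ a` is a scalar `ω`, and comparing traces in `b a b⁻¹ = ω a⁻¹` gives `ω = det a`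
(the trace of `a` is nonzero, as otherwise `a²` would be scalar and `g² = 1`). Write
`orderOf g = 2m`. Then `A = a^m` is not scalar but `A²` is, which for a `2 × 2` matrix forces
`tr A = 0` and `A² = -det A = -(det a)^m`. Hence `a^{2m} w^{-m} = -1` lies in `H`.
In characteristic `2` this cannot happen: `a` commutes with `A`, so lies in `K[A]`, and then
`a² ∈ K + K A²` is scalar.
-/

theorem exists_mem_notMem_of_relIndex_eq_two {Γ : Type*} [Group Γ] {C G : Subgroup Γ}
    (h : C.relIndex G = 2) : ∃ r ∈ G, r ∉ C := by
  by_contra! hGC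
  rw [Subgroup.relIndex_eq_one.2 hGC] at h
  exact absurd h (by norm_num)

theorem mul_mul_inv_eq_inv_of_forall_orderOf_eq_two {Γ : Type*} [Group Γ] {C G : Subgroup Γ}
    (hout : ∀ x ∈ G, x ∉ C → orderOf x = 2) {g r : Γ} (hgG : g ∈ G) (hgC : g ∈ C)
    (hrG : r ∈ G) (hrC : r ∉ C) : r * g * r⁻¹ = g⁻¹ := by
  have hsq : ∀ x ∈ G, x ∉ C → x * x = 1 := fun x hxG hxC => by
    rw [← sq, ← hout x hxG hxC, pow_orderOf_eq_one]
  have hrgC : r * g ∉ C := fun h => hrC (by simpa using C.mul_mem h (C.inv_mem hgC))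
  have hrg := hsq (r * g) (G.mul_mem hrG hgG) hrgC
  rw [inv_eq_of_mul_eq_one_right (hsq r hrG hrC), eq_inv_iff_mul_eq_one, ← hrg]
  group

namespace Matrix

theorem mul_self_eq_trace_smul_sub_det_smul {R : Type*} [CommRing R]
    (A : Matrix (Fin 2) (Fin 2) R) : A * A = A.trace • A - A.det • 1 := by
  ext i j
  fin_cases i <;> fin_cases j <;> simp [mul_apply, trace_fin_two, det_fin_two] <;> ring

variable {K : Type*} [Field K] {A x : Matrix (Fin 2) (Fin 2) K}

theorem trace_inv_fin_two (A : Matrix (Fin 2) (Fin 2) K) :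
    A⁻¹.trace = A.det⁻¹ * A.trace := by
  rw [inv_def, Ring.inverse_eq_inv', trace_smul, adjugate_fin_two, trace_fin_two, trace_fin_two]
  simp [add_comm]

theorem trace_eq_zero_of_mul_self_eq_smul_one {σ : K} (hA : A * A = σ • 1)
    (hns : ∀ k : K, A ≠ k • 1) : A.trace = 0 := by
  by_contra htr
  apply hns (A.trace⁻¹ * (σ + A.det))
  have h : A.trace • A = (σ + A.det) • 1 := by
    rw [add_smul, ← hA, mul_self_eq_trace_smul_sub_det_smul]
    abel
  rw [mul_smul, ← h, smul_smul, inv_mul_cancel₀ htr, one_smul]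

theorem mul_self_eq_neg_det_of_trace_eq_zero (h : A.trace = 0) : A * A = -A.det • 1 := by
  rw [mul_self_eq_trace_smul_sub_det_smul, h, zero_smul, zero_sub, neg_smul]

theorem exists_eq_smul_one_add_smul_of_commute (hA : ∀ k : K, A ≠ k • 1)
    (h : Commute x A) : ∃ c d : K, x = c • 1 + d • A := by
  have e := fun i j => congrFun (congrFun h.eq i) j
  have e00 := e 0 0; have e01 := e 0 1; have e10 := e 1 0; have e11 := e 1 1
  simp only [mul_apply, Fin.sum_univ_two] at e00 e01 e10 e11
  by_cases hb : A 0 1 = 0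
  · by_cases hc : A 1 0 = 0
    · have hd : A 0 0 - A 1 1 ≠ 0 := fun hd => hA (A 0 0) <| by
        ext i j
        fin_cases i <;> fin_cases j <;> simp [hb, hc]
        linear_combination -hd
      refine ⟨x 0 0 - (x 0 0 - x 1 1) / (A 0 0 - A 1 1) * A 0 0,
        (x 0 0 - x 1 1) / (A 0 0 - A 1 1), ?_⟩
      ext i j
      fin_cases i <;> fin_cases j <;> simp [hb, hc] <;> grind
    · refine ⟨x 0 0 - x 1 0 / A 1 0 * A 0 0, x 1 0 / A 1 0, ?_⟩
      ext i j
      fin_cases i <;> fin_cases j <;> simp <;> grind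
  · refine ⟨x 0 0 - x 0 1 / A 0 1 * A 0 0, x 0 1 / A 0 1, ?_⟩
    ext i j
    fin_cases i <;> fin_cases j <;> simp <;> grind

theorem exists_mul_self_eq_smul_one_of_commute (h2 : (2 : K) = 0) {σ : K}
    (hA2 : A * A = σ • 1) (hA : ∀ k : K, A ≠ k • 1) (h : Commute x A) :
    ∃ κ : K, x * x = κ • 1 := by
  obtain ⟨c, d, rfl⟩ := exists_eq_smul_one_add_smul_of_commute hA h
  refine ⟨c * c + d * d * σ, ?_⟩
  have hsq : (c • 1 + d • A) * (c • 1 + d • A) =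
      (c * c + d * d * σ) • 1 + (2 * c * d) • A := by
    simp only [add_mul, mul_add, smul_mul_smul_comm, one_mul, mul_one, hA2, smul_smul]
    module
  rw [hsq, h2, zero_mul, zero_mul, zero_smul, add_zero]

end Matrix

namespace Matrix.GeneralLinearGroup

section CommRing

variable {n R : Type*} [Fintype n] [DecidableEq n] [CommRing R]

theorem mem_center_iff_exists_smul_one {g : GL n R} :
    g ∈ Subgroup.center (GL n R) ↔ ∃ k : R, g.val = k • 1 := by
  simp [mem_center_iff_val_mem_range_scalar, smul_one_eq_diagonal, eq_comm]

theorem neg_one_mem_center : (-1 : GL n R) ∈ Subgroup.center (GL n R) :=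
  mem_center_iff_exists_smul_one.2 ⟨-1, by simp⟩

theorem orderOf_neg_one_eq_two [Nonempty n] (h2 : (2 : R) ≠ 0) :
    orderOf (-1 : GL n R) = 2 := by
  refine orderOf_eq_prime neg_one_sq fun h => h2 ?_
  obtain ⟨i⟩ := ‹Nonempty n›
  have hii : (-1 : R) = 1 := by simpa using congrArg (fun g : GL n R => g.val i i) h
  linear_combination -hii

end CommRing

variable {K : Type*} [Field K]

theorem det_eq_of_val_mul_mul_inv_mul_eq_smul_one {a b : GL (Fin 2) K} {ω : K}
    (htr : a.val.trace ≠ 0) (h : (b * a * b⁻¹ * a).val = ω • 1) : ω = a.val.det := by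
  have hconj : (b * a * b⁻¹).val = ω • a⁻¹.val := by
    rw [← smul_one_mul, ← h, ← Units.val_mul, mul_inv_cancel_right]
  have hdet : a.val.det ≠ 0 := ((isUnit_iff_isUnit_det _).1 a.isUnit).ne_zero
  have htrace := congrArg trace hconj
  rw [Units.val_mul, Units.val_mul, trace_units_conj, trace_smul, coe_units_inv,
    trace_inv_fin_two, smul_eq_mul] at htrace
  field_simp at htrace
  exact htrace.symm

end Matrix.GeneralLinearGroup

namespace Matrix.ProjGenLinGroup

open GeneralLinearGroup

variable {K : Type*} [Field K]

theorem val_pow_ne_smul_one {a : GL (Fin 2) K} {k : ℕ} (hk : k ≠ 0)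
    (hlt : k < orderOf (mk a)) (c : K) : (a ^ k).val ≠ c • 1 := fun h =>
  pow_ne_one_of_lt_orderOf hk hlt <| by
    rw [← map_pow, mk_eq_one, mem_center_iff_exists_smul_one]
    exact ⟨c, h⟩

theorem exists_val_pow_orderOf_eq_smul_one (a : GL (Fin 2) K) :
    ∃ σ : K, (a ^ orderOf (mk a)).val = σ • 1 := by
  rw [← mem_center_iff_exists_smul_one, ← mk_eq_one, map_pow, pow_orderOf_eq_one]

theorem orderOf_ne_two_mul (h2 : (2 : K) = 0) (x : PGL(2, K)) {m : ℕ} (hm : 1 < m) :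
    orderOf x ≠ 2 * m := by
  induction x using induction_on with | mk a => ?_
  intro hx
  obtain ⟨σ, hσ⟩ := exists_val_pow_orderOf_eq_smul_one a
  rw [hx, two_mul, pow_add, Units.val_mul] at hσ
  obtain ⟨κ, hκ⟩ := exists_mul_self_eq_smul_one_of_commute h2 hσ
    (val_pow_ne_smul_one (by omega) (by omega)) ((Commute.refl a).pow_right m).units_val
  exact val_pow_ne_smul_one (a := a) (k := 2) two_ne_zero (by omega) κ
    (by rwa [sq, Units.val_mul])

theorem pow_two_mul_mul_inv_pow_eq_neg_one {a b : GL (Fin 2) K} {m : ℕ}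
    (hab : mk b * mk a * (mk b)⁻¹ = (mk a)⁻¹) (hm : orderOf (mk a) = 2 * m) (hm1 : 1 < m) :
    a ^ (2 * m) * (b * a * b⁻¹ * a)⁻¹ ^ m = -1 := by
  obtain ⟨ω, hω⟩ : ∃ ω : K, (b * a * b⁻¹ * a).val = ω • 1 := by
    rw [← mem_center_iff_exists_smul_one, ← mk_eq_one, map_mul, map_mul, map_mul, map_inv, hab,
      inv_mul_cancel]
  obtain ⟨σ, hσ⟩ := exists_val_pow_orderOf_eq_smul_one a
  rw [hm] at hσ
  have htr : a.val.trace ≠ 0 := fun htr =>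
    val_pow_ne_smul_one (a := a) (k := 2) two_ne_zero (by omega) _
      (by rw [sq, Units.val_mul]; exact mul_self_eq_neg_det_of_trace_eq_zero htr)
  have hσm : (a ^ m).val * (a ^ m).val = σ • 1 := by
    rw [← Units.val_mul, ← pow_add, ← two_mul, hσ]
  have htrm := trace_eq_zero_of_mul_self_eq_smul_one hσm
    (val_pow_ne_smul_one (by omega) (by omega))
  have hσdet : σ = -a.val.det ^ m := by
    have hsq := (mul_self_eq_neg_det_of_trace_eq_zero htrm).symm.trans hσm
    rw [Units.val_pow_eq_pow_val, det_pow] at hsq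
    exact (smul_left_injective K one_ne_zero hsq).symm
  rw [inv_pow, mul_inv_eq_iff_eq_mul, neg_one_mul, Units.ext_iff, Units.val_neg, hσ,
    Units.val_pow_eq_pow_val, hω, smul_pow, one_pow, hσdet,
    det_eq_of_val_mul_mul_inv_mul_eq_smul_one htr hω, neg_smul]

end Matrix.ProjGenLinGroup

open Matrix.GeneralLinearGroup Matrix.ProjGenLinGroup in
theorem stmt5_general (p : ℕ) [Fact p.Prime]
    (H : Subgroup (GL (Fin 2) (AlgebraicClosure (ZMod p))))
    (G C : Subgroup ((GL (Fin 2) (AlgebraicClosure (ZMod p))) ⧸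
      Subgroup.center (GL (Fin 2) (AlgebraicClosure (ZMod p)))))
    (hHG : H.map (QuotientGroup.mk'
      (Subgroup.center (GL (Fin 2) (AlgebraicClosure (ZMod p))))) = G)
    (hidx : C.relIndex G = 2)
    (hout : ∀ x ∈ G, x ∉ C → orderOf x = 2)
    (g : (GL (Fin 2) (AlgebraicClosure (ZMod p))) ⧸
      Subgroup.center (GL (Fin 2) (AlgebraicClosure (ZMod p))))
    (hg : g ∈ G) (hgeven : Even (orderOf g)) (hgord : 5 < orderOf g) :
    g ∈ C ∧ ∃ z : GL (Fin 2) (AlgebraicClosure (ZMod p)),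
      z ∈ H ∧ z ∈ Subgroup.center (GL (Fin 2) (AlgebraicClosure (ZMod p))) ∧
      orderOf z = 2 ∧
      QuotientGroup.mk' (Subgroup.center (GL (Fin 2) (AlgebraicClosure (ZMod p)))) z ∈
        Subgroup.map G.subtype (Subgroup.center G) := by
  have hgC : g ∈ C := by
    by_contra hgC
    have := hout g hg hgC
    omega
  obtain ⟨m, hm⟩ := hgeven
  rw [← two_mul] at hm
  obtain ⟨r, hrG, hrC⟩ := exists_mem_notMem_of_relIndex_eq_two hidx
  have hrg := mul_mul_inv_eq_inv_of_forall_orderOf_eq_two hout hg hgC hrG hrC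
  obtain ⟨a, haH, rfl⟩ : g ∈ H.map _ := hHG ▸ hg
  obtain ⟨b, hbH, rfl⟩ : r ∈ H.map _ := hHG ▸ hrG
  have h2 : (2 : AlgebraicClosure (ZMod p)) ≠ 0 := fun h2 =>
    orderOf_ne_two_mul h2 _ (by omega) hm
  have hwH : b * a * b⁻¹ * a ∈ H :=
    H.mul_mem (H.mul_mem (H.mul_mem hbH haH) (H.inv_mem hbH)) haH
  refine ⟨hgC, -1, ?_, neg_one_mem_center, orderOf_neg_one_eq_two h2, ?_⟩
  · rw [← pow_two_mul_mul_inv_pow_eq_neg_one hrg hm (by omega)]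
    exact H.mul_mem (H.pow_mem haH _) (H.pow_mem (H.inv_mem hwH) _)
  · convert Subgroup.one_mem _
    exact mk_eq_one.2 neg_one_mem_center

/-- Let `G ≤ PGL₂(F̄ₚ)` be dihedral (a cyclic subgroup `C` of index 2 in `G`, every
element of `G` outside `C` having order 2), and let `g ∈ G` generate a cyclic subgroup of even
order `> 5`.  Then `g` lies in the maximal cyclic subgroup `C`, and the preimage in `GL₂` of the
center of `G` contains a scalar element of order two (here `H` is a finite subgroup of `GL₂`
with image `G` in `PGL₂`, and the scalar element can be found in `H`). -/
theorem stmt5 (p : ℕ) [Fact p.Prime]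
    (H : Subgroup (GL (Fin 2) (AlgebraicClosure (ZMod p)))) [Finite H]
    (G C : Subgroup ((GL (Fin 2) (AlgebraicClosure (ZMod p))) ⧸
      Subgroup.center (GL (Fin 2) (AlgebraicClosure (ZMod p)))))
    (hHG : H.map (QuotientGroup.mk'
      (Subgroup.center (GL (Fin 2) (AlgebraicClosure (ZMod p))))) = G)
    (hCG : C ≤ G) (hCyc : IsCyclic C) (hidx : C.relIndex G = 2)
    (hout : ∀ x ∈ G, x ∉ C → orderOf x = 2)
    (g : (GL (Fin 2) (AlgebraicClosure (ZMod p))) ⧸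
      Subgroup.center (GL (Fin 2) (AlgebraicClosure (ZMod p))))
    (hg : g ∈ G) (hgeven : Even (orderOf g)) (hgord : 5 < orderOf g) :
    g ∈ C ∧ ∃ z : GL (Fin 2) (AlgebraicClosure (ZMod p)),
      z ∈ H ∧ z ∈ Subgroup.center (GL (Fin 2) (AlgebraicClosure (ZMod p))) ∧
      orderOf z = 2 ∧
      QuotientGroup.mk' (Subgroup.center (GL (Fin 2) (AlgebraicClosure (ZMod p)))) z ∈
        Subgroup.map G.subtype (Subgroup.center G) :=
  stmt5_general p H G C hHG hidx hout g hg hgeven hgord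
end

section
/- Let O be a complete discrete valuation ring with uniformizer ϖ and residue field 𝔽, and let M = O/(ϖⁿ)·e₁ ⊕ O/(ϖʳ)·e₂ with r ≤ n be an O-module with an action of a group G by O-linear automorphisms. Suppose the induced representation of G on M/ϖM ≅ 𝔽² is such that the image of the group algebra 𝔽[G] in End_𝔽(M/ϖM) is all of End_𝔽(M/ϖM). Then r = n. -/
/-!
If `r < n`, the `ϖ ^ r`-torsion `T` of `M` is preserved by every `O`-linear map, so its image
`L` in `M / ϖM` is preserved by the span of the `G`-action, hence by every endomorphism of
`M / ϖM`. But `L` contains the class of `e₂` and not that of `e₁` (the first coordinate of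
`T + ϖM` lies in `ϖ O/(ϖⁿ)`), while the rank-one map `x ↦ (e₂-coordinate of x mod ϖ) • e₁` is an
endomorphism of `M / ϖM` sending one to the other.
-/

open Submodule

section

variable {R M Q : Type*} [CommRing R] [AddCommGroup M] [Module R M] [AddCommGroup Q] [Module R Q]

theorem Submodule.torsionBy_le_comap (f : M →ₗ[R] Q) (a : R) :
    torsionBy R M a ≤ (torsionBy R Q a).comap f := fun x hx => by
  rw [mem_torsionBy_iff] at hx
  rw [mem_comap, mem_torsionBy_iff, ← map_smul, hx, map_zero]

theorem Ideal.Quotient.isTorsionBySet (I : Ideal R) : Module.IsTorsionBySet R (R ⧸ I) I := by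
  rintro x ⟨a, ha⟩
  obtain ⟨x, rfl⟩ := Ideal.Quotient.mk_surjective x
  rw [Algebra.smul_def, Ideal.Quotient.algebraMap_eq, ← map_mul, Ideal.Quotient.eq_zero_iff_mem]
  exact I.mul_mem_right x ha

theorem LinearMap.smul_top_le_ker {I : Ideal R} (hQ : Module.IsTorsionBySet R Q I)
    (f : M →ₗ[R] Q) : I • ⊤ ≤ ker f :=
  smul_le.mpr fun a ha m _ => by rw [mem_ker, map_smul, hQ (a := ⟨a, ha⟩)]

theorem Submodule.map_mkQ_mem_compatibleMaps {N T : Submodule R M} {f : M →ₗ[R] M}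
    {φ : Module.End R (M ⧸ N)} (hφ : ∀ m : M, φ (N.mkQ m) = N.mkQ (f m))
    (hf : T ≤ T.comap f) : φ ∈ compatibleMaps (T.map N.mkQ) (T.map N.mkQ) := by
  rintro _ ⟨m, hm, rfl⟩
  exact ⟨f m, hf hm, (hφ m).symm⟩

theorem exists_end_quotient_smul_top_apply_mkQ (I : Ideal R) (f : M →ₗ[R] R ⧸ I)
    (v : M ⧸ I • (⊤ : Submodule R M)) :
    ∃ ψ : Module.End R (M ⧸ I • (⊤ : Submodule R M)),
      ∀ m : M, ψ ((I • ⊤ : Submodule R M).mkQ m) = f m • v :=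
  let g := (LinearMap.toSpanSingleton (R ⧸ I) _ v).restrictScalars R ∘ₗ f
  ⟨(I • ⊤ : Submodule R M).liftQ g
    (LinearMap.smul_top_le_ker (Module.isTorsionBySet_quotient_ideal_smul M I) g), fun _ => rfl⟩

end

section

variable {O : Type*} [CommRing O]

abbrev reduceModPow (ϖ : O) {k : ℕ} (hk : k ≠ 0) :
    O ⧸ Ideal.span {ϖ ^ k} →ₗ[O] O ⧸ Ideal.span {ϖ} :=
  factor (Ideal.span_singleton_le_span_singleton.mpr (dvd_pow_self ϖ hk))

theorem reduceModPow_one (ϖ : O) {k : ℕ} (hk : k ≠ 0) : reduceModPow ϖ hk 1 = 1 := rfl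

theorem torsionBy_pow_le_ker_reduceModPow [IsDomain O] {ϖ : O} (hϖ : ϖ ≠ 0) {r n : ℕ}
    (hrn : r < n) :
    torsionBy O (O ⧸ Ideal.span {ϖ ^ n}) (ϖ ^ r) ≤
      LinearMap.ker (reduceModPow ϖ (Nat.ne_zero_of_lt hrn)) := by
  intro x hx
  obtain ⟨a, rfl⟩ := mkQ_surjective _ x
  rw [mem_torsionBy_iff, ← map_smul, mkQ_apply, Quotient.mk_eq_zero, smul_eq_mul,
    Ideal.mem_span_singleton, ← Nat.add_sub_of_le hrn.le, pow_add,
    mul_dvd_mul_iff_left (pow_ne_zero r hϖ)] at hx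
  rw [LinearMap.mem_ker, factor_mk, mkQ_apply, Quotient.mk_eq_zero, Ideal.mem_span_singleton]
  exact (dvd_pow_self ϖ (by omega)).trans hx

variable {M : Type*} [AddCommGroup M] [Module O M]

theorem mkQ_notMem_map_mkQ_torsionBy [IsDomain O] {ϖ : O} (hϖ : Irreducible ϖ) {r n : ℕ}
    (hrn : r < n) (p : M →ₗ[O] O ⧸ Ideal.span {ϖ ^ n}) {x : M} (hx : p x = 1) :
    (Ideal.span {ϖ} • ⊤ : Submodule O M).mkQ x ∉
      (torsionBy O M (ϖ ^ r)).map (Ideal.span {ϖ} • ⊤ : Submodule O M).mkQ := by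
  have hker : Ideal.span {ϖ} • ⊤ ⊔ torsionBy O M (ϖ ^ r) ≤
      LinearMap.ker (reduceModPow ϖ (Nat.ne_zero_of_lt hrn) ∘ₗ p) := by
    refine sup_le (LinearMap.smul_top_le_ker (Ideal.Quotient.isTorsionBySet _) _) ?_
    rw [LinearMap.ker_comp]
    exact (torsionBy_le_comap _ _).trans
      (comap_mono (torsionBy_pow_le_ker_reduceModPow hϖ.ne_zero hrn))
  have : Nontrivial (O ⧸ Ideal.span {ϖ}) :=
    Ideal.Quotient.nontrivial_iff.mpr (Ideal.span_singleton_ne_top hϖ.not_isUnit)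
  rw [← mem_comap, comap_map_mkQ]
  intro hmem
  simpa [hx] using hker hmem

end

theorem stmt6_general (O : Type) [CommRing O] [IsDomain O]
    (ϖ : O) (hϖ : Irreducible ϖ) (n r : ℕ) (hr : 0 < r) (hrn : r ≤ n)
    (G : Type) [Group G] (M : Type) [AddCommGroup M] [Module O M]
    (e : M ≃ₗ[O] (O ⧸ Ideal.span {ϖ ^ n}) × (O ⧸ Ideal.span {ϖ ^ r}))
    (ρ : G →* (M ≃ₗ[O] M))
    (N : Submodule O M) (hN : N = Ideal.span {ϖ} • (⊤ : Submodule O M))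
    (hfull : Submodule.span O
      {φ : Module.End O (M ⧸ N) | ∃ g : G, ∀ m : M,
        φ (Submodule.Quotient.mk m) = Submodule.Quotient.mk (ρ g m)} = ⊤) :
    r = n := by
  subst hN
  obtain rfl | hlt := hrn.eq_or_lt
  · rfl
  set T := torsionBy O M (ϖ ^ r)
  set L := T.map (Ideal.span {ϖ} • ⊤ : Submodule O M).mkQ
  have hinv (φ : Module.End O (M ⧸ Ideal.span {ϖ} • ⊤)) : φ ∈ compatibleMaps L L :=
    span_le.mpr (by rintro _ ⟨g, hg⟩; exact map_mkQ_mem_compatibleMaps hg (torsionBy_le_comap _ _))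
      (hfull ▸ mem_top)
  obtain ⟨ψ, hψ⟩ := exists_end_quotient_smul_top_apply_mkQ (Ideal.span {ϖ})
    (reduceModPow ϖ hr.ne' ∘ₗ LinearMap.snd O _ _ ∘ₗ e.toLinearMap) (mkQ _ (e.symm (1, 0)))
  have he₂ : e.symm (0, 1) ∈ T := by
    rw [mem_torsionBy_iff, ← map_smul, Prod.smul_mk, smul_zero,
      Ideal.Quotient.isTorsionBySet _ (a := ⟨_, Ideal.mem_span_singleton_self _⟩),
      Prod.mk_zero_zero, map_zero]
  have hψe₂ := hinv ψ (mem_map_of_mem he₂)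
  rw [mem_comap, hψ, LinearMap.comp_apply, LinearMap.comp_apply, LinearEquiv.coe_coe,
    e.apply_symm_apply, LinearMap.snd_apply, reduceModPow_one, one_smul] at hψe₂
  exact absurd hψe₂ (mkQ_notMem_map_mkQ_torsionBy hϖ hlt (LinearMap.fst O _ _ ∘ₗ e.toLinearMap)
    (by simp))

/-- Let `O` be a complete DVR with uniformizer `ϖ` and residue field `𝔽`, and
`M = O/(ϖⁿ) ⊕ O/(ϖʳ)` (with `r ≤ n`) an `O`-module with `O`-linear `G`-action such that the
image of the group ring in the endomorphisms of `M/ϖM ≅ 𝔽²` spans all of `End(M/ϖM)`.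
Then `r = n`. -/
theorem stmt6 (O : Type) [CommRing O] [IsDomain O] [IsDiscreteValuationRing O]
    [IsAdicComplete (IsLocalRing.maximalIdeal O) O]
    (ϖ : O) (hϖ : Irreducible ϖ) (n r : ℕ) (hr : 0 < r) (hrn : r ≤ n)
    (G : Type) [Group G] (M : Type) [AddCommGroup M] [Module O M]
    (e : M ≃ₗ[O] (O ⧸ Ideal.span {ϖ ^ n}) × (O ⧸ Ideal.span {ϖ ^ r}))
    (ρ : G →* (M ≃ₗ[O] M))
    (N : Submodule O M) (hN : N = Ideal.span {ϖ} • (⊤ : Submodule O M))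
    (hfull : Submodule.span O
      {φ : Module.End O (M ⧸ N) | ∃ g : G, ∀ m : M,
        φ (Submodule.Quotient.mk m) = Submodule.Quotient.mk (ρ g m)} = ⊤) :
    r = n :=
  stmt6_general O ϖ hϖ n r hr hrn G M e ρ N hN hfull
end
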